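/- For an abelian ℓ-group A, the following are equivalent: (i) A is complemented; (iii) A has a weak unit, the lattice of principal polars of A is bounded, and the inclusion of principal polars into polars is a homomorphism of Boolean algebras — concretely, there exists w ∈ A with w^⊥⊥ = A and for every x ∈ A there exists y ∈ A with x^⊥ = y^⊥⊥; (iv) for every g ∈ A there exists f ∈ A such that for every minimal prime ideal p of A, g ∈ p if and only if f ∉ p (i.e., the zero set V_m(g) of g in the minimal spectrum is the complement of the zero set V_m(f) of f). -/

import Mathlib

/-!
Everything is phrased through polars. Call `y` a complement of `x` when `y ∈ x^⊥` and
`x^⊥ ∩ y^⊥ = 0`; by distributivity of the lattice this says precisely that `|x| ⊔ |y|` is a weak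
unit. A complement `y` of `x` satisfies `x^⊥ = y^⊥⊥` (an element of `x^⊥` meets any element of
`y^⊥` in `x^⊥ ∩ y^⊥ = 0`), and conversely `x^⊥ = y^⊥⊥` makes `y` a complement of `x`.

For (iv) two facts about minimal primes are needed. Every `g ≠ 0` avoids one: by Zorn an ideal
maximal among those missing `|g|` is prime (using that `n • a ⊓ n • b = 0` when `a ⊓ b = 0`), and
by Zorn again it contains a minimal prime. Every `g` in a minimal prime `p` is disjoint from some
element outside `p`. Given these, `y` is a complement of `x` iff each minimal prime contains
exactly one of `x`, `y`.
-/

/-- The absolute value `|g| = (g ⊔ 0) + ((-g) ⊔ 0)` in a lattice-ordered abelian group. -/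
def absl {A : Type*} [Lattice A] [AddCommGroup A] (g : A) : A :=
  (g ⊔ 0) + (-g ⊔ 0)

/-- The polar `T^⊥ = {x : |x| ⊓ |t| = 0 for all t ∈ T}`. -/
def polar {A : Type*} [Lattice A] [AddCommGroup A] (T : Set A) : Set A :=
  {x : A | ∀ t ∈ T, absl x ⊓ absl t = 0}

/-- An ideal of an abelian ℓ-group: an order-convex sublattice subgroup. -/
structure IsIdeal {A : Type*} [Lattice A] [AddCommGroup A] (I : Set A) : Prop where
  zero_mem : (0 : A) ∈ I
  add_mem : ∀ ⦃a b : A⦄, a ∈ I → b ∈ I → a + b ∈ I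
  neg_mem : ∀ ⦃a : A⦄, a ∈ I → -a ∈ I
  sup_mem : ∀ ⦃a b : A⦄, a ∈ I → b ∈ I → a ⊔ b ∈ I
  inf_mem : ∀ ⦃a b : A⦄, a ∈ I → b ∈ I → a ⊓ b ∈ I
  convex : ∀ ⦃a b c : A⦄, a ∈ I → c ∈ I → a ≤ b → b ≤ c → b ∈ I

/-- A prime ideal: a proper ideal such that `a ⊓ b = 0` implies `a ∈ p` or `b ∈ p`. -/
def IsPrimeIdeal {A : Type*} [Lattice A] [AddCommGroup A] (p : Set A) : Prop :=
  IsIdeal p ∧ p ≠ Set.univ ∧ ∀ a b : A, a ⊓ b = 0 → a ∈ p ∨ b ∈ p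

/-- A minimal prime ideal: a prime ideal containing no strictly smaller prime ideal. -/
def IsMinimalPrimeLGroup {A : Type*} [Lattice A] [AddCommGroup A] (p : Set A) : Prop :=
  IsPrimeIdeal p ∧ ∀ q : Set A, IsPrimeIdeal q → q ⊆ p → q = p

/-- A weak unit: `w ≥ 0` and `w ⊓ |g| = 0` implies `g = 0`. -/
def IsWeakUnit {A : Type*} [Lattice A] [AddCommGroup A] (w : A) : Prop :=
  0 ≤ w ∧ ∀ g : A, w ⊓ absl g = 0 → g = 0

/-- A complemented ℓ-group: for every `x` there is `y` with `|x| ⊓ |y| = 0` and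
`|x| ⊔ |y|` a weak unit. -/
def ComplementedLGroup (A : Type*) [Lattice A] [AddCommGroup A] : Prop :=
  ∀ x : A, ∃ y : A, absl x ⊓ absl y = 0 ∧ IsWeakUnit (absl x ⊔ absl y)

theorem inf_eq_zero_of_le {A : Type*} [Lattice A] [Zero A] {u v w : A} (hu : 0 ≤ u) (huv : u ≤ v)
    (h : v ⊓ w = 0) : u ⊓ w = 0 :=
  le_antisymm (h ▸ inf_le_inf_right w huv) (le_inf hu (h ▸ inf_le_right))

section LatticeOrderedGroup

variable {A : Type*} [Lattice A] [AddCommGroup A] [AddLeftMono A]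

theorem absl_eq_abs (g : A) : absl g = |g| := posPart_add_negPart g

theorem eq_zero_of_abs_eq_zero {x : A} (h : |x| = 0) : x = 0 :=
  le_antisymm (h ▸ le_abs_self x) (neg_nonpos.1 (h ▸ neg_le_abs x))

theorem abs_abs_inf_abs_le_left (a b : A) : |(|a| ⊓ |b|)| ≤ |a| := by
  rw [abs_of_nonneg (le_inf (abs_nonneg a) (abs_nonneg b))]
  exact inf_le_left

theorem abs_abs_inf_abs_le_right (a b : A) : |(|a| ⊓ |b|)| ≤ |b| := by
  rw [abs_of_nonneg (le_inf (abs_nonneg a) (abs_nonneg b))]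
  exact inf_le_right

theorem abs_sup_le_sup_abs (a b : A) : |a ⊔ b| ≤ |a| ⊔ |b| :=
  abs_le'.2 ⟨sup_le_sup (le_abs_self a) (le_abs_self b),
    neg_sup a b ▸ inf_le_left.trans ((neg_le_abs a).trans le_sup_left)⟩

theorem abs_inf_le_sup_abs (a b : A) : |a ⊓ b| ≤ |a| ⊔ |b| :=
  abs_le'.2 ⟨inf_le_left.trans ((le_abs_self a).trans le_sup_left),
    neg_inf a b ▸ sup_le_sup (neg_le_abs a) (neg_le_abs b)⟩

theorem abs_le_sup_abs_of_le_of_le {a b c : A} (hab : a ≤ b) (hbc : b ≤ c) : |b| ≤ |a| ⊔ |c| :=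
  abs_le'.2 ⟨hbc.trans ((le_abs_self c).trans le_sup_right),
    (neg_le_neg_iff.2 hab).trans ((neg_le_abs a).trans le_sup_left)⟩

theorem sup_abs_le_add_abs (a b : A) : |a| ⊔ |b| ≤ |a| + |b| :=
  sup_le (le_add_of_nonneg_right (abs_nonneg b)) (le_add_of_nonneg_left (abs_nonneg a))

theorem inf_add_le_inf_add_inf {a b c : A} (ha : 0 ≤ a) (hb : 0 ≤ b) (hc : 0 ≤ c) :
    a ⊓ (b + c) ≤ a ⊓ b + a ⊓ c := by
  rw [inf_add, add_inf, add_inf]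
  exact le_inf (le_inf (inf_le_left.trans (le_add_of_nonneg_right ha))
      (inf_le_left.trans (le_add_of_nonneg_right hc)))
    (le_inf (inf_le_left.trans (le_add_of_nonneg_left hb)) inf_le_right)

theorem inf_add_eq_zero {a b c : A} (hab : a ⊓ b = 0) (hac : a ⊓ c = 0) : a ⊓ (b + c) = 0 := by
  have ha : 0 ≤ a := hab ▸ inf_le_left
  have hb : 0 ≤ b := hab ▸ inf_le_right
  have hc : 0 ≤ c := hac ▸ inf_le_right
  refine le_antisymm ?_ (le_inf ha (add_nonneg hb hc))
  simpa [hab, hac] using inf_add_le_inf_add_inf ha hb hc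

theorem inf_nsmul_eq_zero {a b : A} (h : a ⊓ b = 0) (n : ℕ) : a ⊓ n • b = 0 := by
  induction n with
  | zero => simpa using (h ▸ inf_le_left : 0 ≤ a)
  | succ n ih => rw [succ_nsmul]; exact inf_add_eq_zero ih h

theorem nsmul_inf_nsmul_eq_zero {a b : A} (h : a ⊓ b = 0) (n : ℕ) : n • a ⊓ n • b = 0 := by
  rw [inf_comm]
  exact inf_nsmul_eq_zero (by rw [inf_comm, inf_nsmul_eq_zero h]) n

theorem sup_inf_eq_zero_iff {a b c : A} (ha : 0 ≤ a) (hb : 0 ≤ b) :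
    (a ⊔ b) ⊓ c = 0 ↔ a ⊓ c = 0 ∧ b ⊓ c = 0 := by
  let := AddCommGroup.toDistribLattice A
  refine ⟨fun h => ⟨inf_eq_zero_of_le ha le_sup_left h, inf_eq_zero_of_le hb le_sup_right h⟩,
    fun ⟨hac, hbc⟩ => ?_⟩
  rw [inf_sup_right, hac, hbc, sup_idem]

end LatticeOrderedGroup

section Polars

variable {A : Type*} [Lattice A] [AddCommGroup A] [AddLeftMono A]

open LatticeOrderedAddCommGroup

theorem mem_polar {T : Set A} {x : A} : x ∈ polar T ↔ ∀ t ∈ T, |x| ⊓ |t| = 0 := by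
  simp [polar, absl_eq_abs]

theorem mem_polar_singleton {x y : A} : x ∈ polar {y} ↔ |x| ⊓ |y| = 0 := by
  simp [mem_polar]

theorem mem_polar_singleton_comm {x y : A} : x ∈ polar {y} ↔ y ∈ polar {x} := by
  simp [mem_polar_singleton, inf_comm]

theorem isSolid_polar (T : Set A) : IsSolid (polar T) := fun _ hx _ hyx =>
  mem_polar.2 fun t ht => inf_eq_zero_of_le (abs_nonneg _) hyx (mem_polar.1 hx t ht)

theorem subset_polar_polar (T : Set A) : T ⊆ polar (polar T) := fun _ hx =>
  mem_polar.2 fun _ ht => by rw [inf_comm]; exact mem_polar.1 ht _ hx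

theorem eq_zero_of_mem_polar_of_mem {T : Set A} {x : A} (hxT : x ∈ polar T) (hx : x ∈ T) :
    x = 0 :=
  eq_zero_of_abs_eq_zero (by simpa using mem_polar.1 hxT x hx)

theorem polar_eq_univ_of_subset_zero {T : Set A} (hT : T ⊆ {0}) : polar T = Set.univ :=
  Set.eq_univ_of_forall fun x => mem_polar.2 fun t ht => by
    simp [Set.mem_singleton_iff.1 (hT ht)]

theorem polar_singleton_abs_sup_abs (x y : A) : polar {|x| ⊔ |y|} = polar {x} ∩ polar {y} := by
  ext z
  simp only [Set.mem_inter_iff, mem_polar_singleton,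
    abs_of_nonneg (le_sup_of_le_left (abs_nonneg x) : 0 ≤ |x| ⊔ |y|), inf_comm |z|,
    sup_inf_eq_zero_iff (abs_nonneg x) (abs_nonneg y)]

theorem isWeakUnit_abs_sup_abs_iff {x y : A} :
    IsWeakUnit (|x| ⊔ |y|) ↔ polar {x} ∩ polar {y} ⊆ {0} := by
  have hx := abs_nonneg x
  have hy := abs_nonneg y
  simp only [IsWeakUnit, absl_eq_abs, le_sup_of_le_left hx, true_and, Set.subset_def,
    Set.mem_inter_iff, mem_polar_singleton, Set.mem_singleton_iff, inf_comm _ |x|,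
    inf_comm _ |y|, sup_inf_eq_zero_iff hx hy, and_imp]

def IsPolarComplement (x y : A) : Prop :=
  y ∈ polar {x} ∧ polar {x} ∩ polar {y} ⊆ {0}

theorem complementedLGroup_iff :
    ComplementedLGroup A ↔ ∀ x : A, ∃ y, IsPolarComplement x y := by
  simp only [ComplementedLGroup, IsPolarComplement, absl_eq_abs, isWeakUnit_abs_sup_abs_iff,
    mem_polar_singleton]
  exact forall_congr' fun x => exists_congr fun y => by rw [inf_comm]

end Polars

section Ideals

variable {A : Type*} [Lattice A] [AddCommGroup A] [AddLeftMono A]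

open LatticeOrderedAddCommGroup

theorem isIdeal_iff {I : Set A} :
    IsIdeal I ↔ (0 : A) ∈ I ∧ ∀ ⦃x y z : A⦄, x ∈ I → y ∈ I → |z| ≤ |x| + |y| → z ∈ I := by
  refine ⟨fun hI => ⟨hI.zero_mem, fun x y z hx hy hz => ?_⟩, fun ⟨h0, hI⟩ => ?_⟩
  · have hs := hI.add_mem (hI.sup_mem hx (hI.neg_mem hx)) (hI.sup_mem hy (hI.neg_mem hy))
    exact hI.convex (hI.neg_mem hs) hs (neg_le.1 (abs_le'.1 hz).2) (abs_le'.1 hz).1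
  have hI' : ∀ ⦃x y z : A⦄, x ∈ I → y ∈ I → |z| ≤ |x| ⊔ |y| → z ∈ I :=
    fun x y z hx hy hz => hI hx hy (hz.trans (sup_abs_le_add_abs x y))
  exact ⟨h0, fun a b ha hb => hI ha hb (abs_add_le a b),
    fun a ha => hI' ha ha (by rw [abs_neg, sup_idem]),
    fun a b ha hb => hI' ha hb (abs_sup_le_sup_abs a b),
    fun a b ha hb => hI' ha hb (abs_inf_le_sup_abs a b),
    fun a b c ha hc hab hbc => hI' ha hc (abs_le_sup_abs_of_le_of_le hab hbc)⟩

namespace IsIdeal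

variable {I : Set A}

theorem mem_of_abs_le_add (hI : IsIdeal I) {x y z : A} (hx : x ∈ I) (hy : y ∈ I)
    (hz : |z| ≤ |x| + |y|) : z ∈ I :=
  (isIdeal_iff.1 hI).2 hx hy hz

theorem isSolid (hI : IsIdeal I) : IsSolid I := fun _ hx _ hyx =>
  hI.mem_of_abs_le_add hx hI.zero_mem (by simpa using hyx)

theorem abs_mem_iff (hI : IsIdeal I) {x : A} : |x| ∈ I ↔ x ∈ I :=
  ⟨fun h => hI.isSolid h (abs_abs x).ge, fun h => hI.sup_mem h (hI.neg_mem h)⟩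

theorem abs_inf_abs_mem (hI : IsIdeal I) {a b : A} (h : a ∈ I ∨ b ∈ I) : |a| ⊓ |b| ∈ I :=
  h.elim (fun ha => hI.isSolid ha (abs_abs_inf_abs_le_left a b))
    fun hb => hI.isSolid hb (abs_abs_inf_abs_le_right a b)

theorem sInter {C : Set (Set A)} (hC : ∀ I ∈ C, IsIdeal I) : IsIdeal (⋂₀ C) :=
  isIdeal_iff.2 ⟨fun I hI => (hC I hI).zero_mem,
    fun _ _ _ hx hy hz I hI => (hC I hI).mem_of_abs_le_add (hx I hI) (hy I hI) hz⟩

theorem sUnion_of_isChain {C : Set (Set A)} (hC : ∀ I ∈ C, IsIdeal I)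
    (hchain : IsChain (· ⊆ ·) C) (hne : C.Nonempty) : IsIdeal (⋃₀ C) := by
  obtain ⟨I₀, hI₀⟩ := hne
  refine isIdeal_iff.2 ⟨⟨I₀, hI₀, (hC I₀ hI₀).zero_mem⟩, ?_⟩
  rintro x y z ⟨I, hI, hx⟩ ⟨J, hJ, hy⟩ hz
  rcases hchain.total hI hJ with hIJ | hJI
  · exact ⟨J, hJ, (hC J hJ).mem_of_abs_le_add (hIJ hx) hy hz⟩
  · exact ⟨I, hI, (hC I hI).mem_of_abs_le_add hx (hJI hy) hz⟩

end IsIdeal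

theorem isIdeal_singleton_zero : IsIdeal ({0} : Set A) := by
  refine isIdeal_iff.2 ⟨rfl, ?_⟩
  rintro x y z rfl rfl hz
  exact eq_zero_of_abs_eq_zero (le_antisymm (by simpa using hz) (abs_nonneg z))

/-- The ideal generated by `I` and a positive element `a`. -/
def idealAdjoin (I : Set A) (a : A) : Set A :=
  {g | ∃ c ∈ I, 0 ≤ c ∧ ∃ n : ℕ, |g| ≤ c + n • a}

namespace IsIdeal

variable {I : Set A}

theorem idealAdjoin (hI : IsIdeal I) (a : A) : IsIdeal (_root_.idealAdjoin I a) := by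
  refine isIdeal_iff.2 ⟨⟨0, hI.zero_mem, le_rfl, 0, by simp⟩, ?_⟩
  rintro x y z ⟨c, hc, hc0, n, hx⟩ ⟨d, hd, hd0, m, hy⟩ hz
  refine ⟨c + d, hI.add_mem hc hd, add_nonneg hc0 hd0, n + m, hz.trans ?_⟩
  calc |x| + |y| ≤ (c + n • a) + (d + m • a) := add_le_add hx hy
    _ = c + d + (n + m) • a := by rw [add_nsmul]; abel

theorem subset_idealAdjoin (hI : IsIdeal I) (a : A) : I ⊆ _root_.idealAdjoin I a := fun g hg =>
  ⟨|g|, hI.abs_mem_iff.2 hg, abs_nonneg g, 0, by simp⟩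

theorem mem_idealAdjoin_self (hI : IsIdeal I) {a : A} (ha : 0 ≤ a) : a ∈ _root_.idealAdjoin I a :=
  ⟨0, hI.zero_mem, le_rfl, 1, by simp [abs_of_nonneg ha]⟩

end IsIdeal

end Ideals

section PrimeIdeals

variable {A : Type*} [Lattice A] [AddCommGroup A] [AddLeftMono A]

namespace IsPrimeIdeal

variable {p : Set A}

theorem mem_or_mem_of_mem_polar (hp : IsPrimeIdeal p) {x y : A} (h : x ∈ polar {y}) :
    x ∈ p ∨ y ∈ p :=
  (hp.2.2 _ _ (mem_polar_singleton.1 h)).imp hp.1.abs_mem_iff.1 hp.1.abs_mem_iff.1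

theorem inf_notMem (hp : IsPrimeIdeal p) {a b : A} (ha : a ∉ p) (hb : b ∉ p) : a ⊓ b ∉ p := by
  intro hab
  have hdisj : (a - a ⊓ b) ⊓ (b - a ⊓ b) = 0 := by rw [← inf_sub, sub_self]
  rcases hp.2.2 _ _ hdisj with h | h
  · exact ha (by simpa using hp.1.add_mem h hab)
  · exact hb (by simpa using hp.1.add_mem h hab)

theorem sInter_of_isChain {C : Set (Set A)} (hC : ∀ p ∈ C, IsPrimeIdeal p)
    (hchain : IsChain (· ⊆ ·) C) (hne : C.Nonempty) : IsPrimeIdeal (⋂₀ C) := by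
  obtain ⟨p₀, hp₀⟩ := hne
  refine ⟨IsIdeal.sInter fun p hp => (hC p hp).1, fun h => (hC p₀ hp₀).2.1 ?_, fun a b hab => ?_⟩
  · exact Set.eq_univ_of_univ_subset (h ▸ Set.sInter_subset_of_mem hp₀)
  by_contra! hnot
  simp only [Set.mem_sInter, not_forall] at hnot
  obtain ⟨⟨p, hp, hap⟩, ⟨q, hq, hbq⟩⟩ := hnot
  rcases hchain.total hp hq with hpq | hqp
  · exact ((hC p hp).2.2 a b hab).elim hap fun hb => hbq (hpq hb)
  · exact ((hC q hq).2.2 a b hab).elim (fun ha => hap (hqp ha)) hbq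

end IsPrimeIdeal

theorem inf_le_of_le_add_nsmul {a b c m₁ m₂ : A} (hab : a ⊓ b = 0) {n : ℕ}
    (h₁ : m₁ ≤ c + n • a) (h₂ : m₂ ≤ c + n • b) : m₁ ⊓ m₂ ≤ c :=
  calc m₁ ⊓ m₂ ≤ (c + n • a) ⊓ (c + n • b) := inf_le_inf h₁ h₂
    _ = c := by rw [← add_inf, nsmul_inf_nsmul_eq_zero hab, add_zero]

theorem exists_maximal_isIdeal_disjoint {M : Set A} (hM0 : (0 : A) ∉ M) :
    ∃ q, Maximal (fun I => IsIdeal I ∧ Disjoint I M) q := by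
  obtain ⟨q, -, hq⟩ := zorn_subset_nonempty {I | IsIdeal I ∧ Disjoint I M}
    (fun C hC hchain hne => ⟨⋃₀ C,
      ⟨IsIdeal.sUnion_of_isChain (fun I hI => (hC hI).1) hchain hne,
        Set.disjoint_sUnion_left.2 fun I hI => (hC hI).2⟩,
      fun _ => Set.subset_sUnion_of_mem⟩)
    {0} ⟨isIdeal_singleton_zero, Set.disjoint_singleton_left.2 hM0⟩
  exact ⟨q, hq⟩

theorem IsPrimeIdeal.of_maximal_disjoint {M : Set A} (hMpos : ∀ m ∈ M, 0 ≤ m) (hM : InfClosed M)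
    (hMne : M.Nonempty) {q : Set A} (hq : Maximal (fun I => IsIdeal I ∧ Disjoint I M) q) :
    IsPrimeIdeal q := by
  obtain ⟨⟨hqI, hqM⟩, hmax⟩ := hq
  refine ⟨hqI, fun h => ?_, fun a b hab => ?_⟩
  · obtain ⟨m, hm⟩ := hMne
    exact Set.disjoint_left.1 hqM (h ▸ Set.mem_univ m) hm
  have meets : ∀ x, 0 ≤ x → x ∉ q → ∃ m ∈ M, m ∈ idealAdjoin q x := by
    intro x hx hxq
    by_contra! hdisj
    exact hxq (hmax ⟨hqI.idealAdjoin x, Set.disjoint_right.2 hdisj⟩ (hqI.subset_idealAdjoin x)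
      (hqI.mem_idealAdjoin_self hx))
  by_contra! hnot
  have ha : 0 ≤ a := hab ▸ inf_le_left
  have hb : 0 ≤ b := hab ▸ inf_le_right
  obtain ⟨m₁, hm₁, c₁, hc₁, hc₁0, n₁, h₁⟩ := meets a ha hnot.1
  obtain ⟨m₂, hm₂, c₂, hc₂, hc₂0, n₂, h₂⟩ := meets b hb hnot.2
  have hle : m₁ ⊓ m₂ ≤ c₁ + c₂ := inf_le_of_le_add_nsmul hab (n := n₁ + n₂)
    ((le_abs_self m₁).trans (h₁.trans (add_le_add (le_add_of_nonneg_right hc₂0)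
      (nsmul_le_nsmul_left ha (n₁.le_add_right n₂)))))
    ((le_abs_self m₂).trans (h₂.trans (add_le_add (le_add_of_nonneg_left hc₁0)
      (nsmul_le_nsmul_left hb (n₂.le_add_left n₁)))))
  exact Set.disjoint_left.1 hqM (hqI.convex hqI.zero_mem (hqI.add_mem hc₁ hc₂)
    (le_inf (hMpos _ hm₁) (hMpos _ hm₂)) hle) (hM hm₁ hm₂)

theorem exists_isPrimeIdeal_disjoint {M : Set A} (hM0 : (0 : A) ∉ M) (hMpos : ∀ m ∈ M, 0 ≤ m)
    (hM : InfClosed M) (hMne : M.Nonempty) : ∃ q, IsPrimeIdeal q ∧ Disjoint q M :=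
  let ⟨q, hq⟩ := exists_maximal_isIdeal_disjoint hM0
  ⟨q, IsPrimeIdeal.of_maximal_disjoint hMpos hM hMne hq, hq.1.2⟩

theorem exists_isMinimalPrime_le {p : Set A} (hp : IsPrimeIdeal p) :
    ∃ m, IsMinimalPrimeLGroup m ∧ m ⊆ p := by
  obtain ⟨m, hmp, hm⟩ := zorn_superset_nonempty {q : Set A | IsPrimeIdeal q}
    (fun C hC hchain hne => ⟨⋂₀ C, IsPrimeIdeal.sInter_of_isChain hC hchain hne,
      fun _ => Set.sInter_subset_of_mem⟩) p hp
  exact ⟨m, ⟨hm.1, fun q hq hqm => le_antisymm hqm (hm.2 hq hqm)⟩, hmp⟩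

theorem exists_isMinimalPrime_notMem {g : A} (hg : g ≠ 0) :
    ∃ p, IsMinimalPrimeLGroup p ∧ g ∉ p := by
  have habs : (0 : A) ∉ ({|g|} : Set A) := fun h => hg (eq_zero_of_abs_eq_zero h.symm)
  obtain ⟨q, hq, hqg⟩ := exists_isPrimeIdeal_disjoint habs (by simp) infClosed_singleton
    (Set.singleton_nonempty _)
  obtain ⟨p, hp, hpq⟩ := exists_isMinimalPrime_le hq
  exact ⟨p, hp, fun hgp => Set.disjoint_singleton_right.1 hqg (hq.1.abs_mem_iff.2 (hpq hgp))⟩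

theorem IsMinimalPrimeLGroup.exists_mem_polar_notMem {p : Set A} (hp : IsMinimalPrimeLGroup p)
    {g : A} (hg : g ∈ p) : ∃ h ∈ polar {g}, h ∉ p := by
  by_contra! hpolar
  have hpI : IsIdeal p := hp.1.1
  -- A prime avoiding `M = |g| ⊓ (A⁺ \ p)` lies inside `p`, hence equals `p`; yet `p` meets `M`.
  set P := {x : A | 0 ≤ x ∧ x ∉ p}
  set M := (|g| ⊓ ·) '' P
  have hM0 : (0 : A) ∉ M := by
    rintro ⟨x, ⟨hx0, hxp⟩, hx⟩
    exact hxp (hpolar x (mem_polar_singleton.2 (by rwa [abs_of_nonneg hx0, inf_comm])))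
  have hMpos : ∀ m ∈ M, 0 ≤ m := by
    rintro _ ⟨x, ⟨hx0, -⟩, rfl⟩
    exact le_inf (abs_nonneg g) hx0
  have hM : InfClosed M := by
    rintro _ ⟨x, ⟨hx0, hxp⟩, rfl⟩ _ ⟨y, ⟨hy0, hyp⟩, rfl⟩
    exact ⟨x ⊓ y, ⟨le_inf hx0 hy0, hp.1.inf_notMem hxp hyp⟩, inf_inf_distrib_left _ _ _⟩
  have abs_mem_P : ∀ {x : A}, x ∉ p → |x| ∈ P := fun hx =>
    ⟨abs_nonneg _, fun h => hx (hpI.abs_mem_iff.1 h)⟩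
  obtain ⟨z, hz⟩ : ∃ z, z ∉ p := by
    by_contra! h
    exact hp.1.2.1 (Set.eq_univ_of_forall h)
  obtain ⟨q, hq, hqM⟩ := exists_isPrimeIdeal_disjoint hM0 hMpos hM ⟨_, |z|, abs_mem_P hz, rfl⟩
  have notMem : ∀ {x : A}, x ∉ p → |g| ⊓ |x| ∉ q := fun {x} hx hmem =>
    Set.disjoint_left.1 hqM hmem ⟨|x|, abs_mem_P hx, rfl⟩
  have hqp : q ⊆ p := fun x hxq => by
    by_contra hxp
    exact notMem hxp (hq.1.abs_inf_abs_mem (.inr hxq))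
  rw [hp.2 q hq hqp] at notMem
  exact notMem hz (hpI.abs_inf_abs_mem (.inl hg))

end PrimeIdeals

namespace IsPolarComplement

variable {A : Type*} [Lattice A] [AddCommGroup A] [AddLeftMono A] {x y : A}

open LatticeOrderedAddCommGroup

theorem polar_eq_polar_polar (h : IsPolarComplement x y) : polar {x} = polar (polar {y}) := by
  refine subset_antisymm (fun z hz => mem_polar.2 fun t ht => ?_) fun z hz => ?_
  · exact h.2 ⟨isSolid_polar _ hz (abs_abs_inf_abs_le_left z t),
      isSolid_polar _ ht (abs_abs_inf_abs_le_right z t)⟩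
  · exact mem_polar_singleton.2 (mem_polar.1 hz x (mem_polar_singleton_comm.1 h.1))

theorem of_polar_eq_polar_polar (h : polar {x} = polar (polar {y})) : IsPolarComplement x y :=
  ⟨h ▸ subset_polar_polar _ (Set.mem_singleton y),
    fun _ ⟨hgx, hgy⟩ => eq_zero_of_mem_polar_of_mem (h ▸ hgx) hgy⟩

theorem mem_iff_notMem (h : IsPolarComplement x y) {p : Set A} (hp : IsMinimalPrimeLGroup p) :
    x ∈ p ↔ y ∉ p := by
  refine ⟨fun hx hyp => ?_, fun hyp => (hp.1.mem_or_mem_of_mem_polar h.1).resolve_left hyp⟩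
  have hpI : IsIdeal p := hp.1.1
  obtain ⟨g, hg, hgp⟩ := hp.exists_mem_polar_notMem
    (hpI.sup_mem (hpI.abs_mem_iff.2 hx) (hpI.abs_mem_iff.2 hyp))
  rw [polar_singleton_abs_sup_abs] at hg
  exact hgp (h.2 hg ▸ hpI.zero_mem)

theorem of_forall_isMinimalPrime (h : ∀ p : Set A, IsMinimalPrimeLGroup p → (x ∈ p ↔ y ∉ p)) :
    IsPolarComplement x y := by
  constructor
  · rw [mem_polar_singleton]
    by_contra hne
    obtain ⟨p, hp, hnp⟩ := exists_isMinimalPrime_notMem hne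
    exact hnp (hp.1.1.abs_inf_abs_mem (or_iff_not_imp_left.2 (h p hp).2))
  · rintro g ⟨hgx, hgy⟩
    by_contra hg
    obtain ⟨p, hp, hgp⟩ := exists_isMinimalPrime_notMem hg
    exact (h p hp).1 ((hp.1.mem_or_mem_of_mem_polar hgx).resolve_left hgp)
      ((hp.1.mem_or_mem_of_mem_polar hgy).resolve_left hgp)

end IsPolarComplement

/-- (i) ↔ (iii) ↔ (iv) of the Conrad–Martinez characterisation: `A` is complemented
iff there is `w` with `w^⊥⊥ = A` and every `x^⊥` is a principal polar `y^⊥⊥`,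
iff for every `g` there is `f` such that for every minimal prime `p`, `g ∈ p ↔ f ∉ p`. -/
theorem statement3 {A : Type*} [Lattice A] [AddCommGroup A]
    [CovariantClass A A (· + ·) (· ≤ ·)] :
    (ComplementedLGroup A ↔
      ((∃ w : A, polar (polar {w}) = Set.univ) ∧
        ∀ x : A, ∃ y : A, polar {x} = polar (polar {y}))) ∧
    (ComplementedLGroup A ↔
      ∀ g : A, ∃ f : A, ∀ p : Set A, IsMinimalPrimeLGroup p → (g ∈ p ↔ f ∉ p)) := by
  rw [complementedLGroup_iff]
  refine ⟨⟨fun hc => ⟨?_, fun x => ?_⟩, fun ⟨_, h⟩ x => ?_⟩, ⟨fun hc g => ?_, fun h x => ?_⟩⟩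
  · -- a complement of `0` has zero polar, so its bipolar is everything
    obtain ⟨y, -, hy⟩ := hc 0
    rw [polar_eq_univ_of_subset_zero subset_rfl, Set.univ_inter] at hy
    exact ⟨y, polar_eq_univ_of_subset_zero hy⟩
  · obtain ⟨y, hy⟩ := hc x
    exact ⟨y, hy.polar_eq_polar_polar⟩
  · obtain ⟨y, hy⟩ := h x
    exact ⟨y, .of_polar_eq_polar_polar hy⟩
  · obtain ⟨f, hf⟩ := hc g
    exact ⟨f, fun p hp => hf.mem_iff_notMem hp⟩
  · obtain ⟨f, hf⟩ := h x
    exact ⟨f, .of_forall_isMinimalPrime hf⟩
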